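/- arXiv:1201.1271 — 3 statements merged into one kernel-verified Lean document; each statement's English description precedes it below -/
import Mathlib

section
/- Let A₁ and A₂ be unital associative ℂ-algebras, W₁ a simple A₁-module and W₂ a simple A₂-module, and assume that every A₁-module endomorphism of W₁ and every A₂-module endomorphism of W₂ is a scalar multiple of the identity. Then W₁ ⊗_ℂ W₂ is a simple module over A₁ ⊗_ℂ A₂. (This is the 'if' direction of Theorem 3.6 under the Schur-type hypothesis on endomorphism rings; the proof applies the Jacobson density theorem to each factor: given linearly independent vectors in each factor, operators can be found sending one to an arbitrary target and annihilating the others.) -/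
open TensorProduct

/-!
Schur's hypothesis makes every `ℂ`-linear endomorphism of `W₂` commute with `End_{A₂} W₂`, so by
the Jacobson density theorem `A₂` acts on `W₂` like any prescribed `ℂ`-linear map on finitely many
vectors. Hence for a nonzero `t ∈ W₁ ⊗ W₂`, some `1 ⊗ a` acts on `t` as `id ⊗ g`, where `g` is the
rank-one projection onto a basis vector `b i` along the other basis vectors; this produces a
nonzero pure tensor `x ⊗ b i` in the submodule generated by `t`. Simplicity of `W₁` and `W₂`
then shows that a nonzero pure tensor generates everything.
-/

theorem IsSimpleModule.exists_smul_eq_of_forall_end_eq_smul {K A W : Type*} [Semiring K] [Ring A]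
    [AddCommGroup W] [Module K W] [Module A W] [IsSimpleModule A W]
    (hend : ∀ φ : W →ₗ[A] W, ∃ c : K, ∀ w : W, φ w = c • w) (g : W →ₗ[K] W) (s : Finset W) :
    ∃ a : A, ∀ w ∈ s, a • w = g w := by
  -- `g` commutes with every `A`-endomorphism, all of which are scalars.
  let f : Module.End (Module.End A W) W :=
    { toFun := g
      map_add' := g.map_add
      map_smul' := fun φ w => by
        obtain ⟨c, hc⟩ := hend φ
        simp [Module.End.smul_def, hc] }
  obtain ⟨a, ha⟩ := jacobson_density f s
  exact ⟨a, fun w hw => (ha w hw).symm⟩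

theorem TensorProduct.exists_lTensor_eq_tmul_of_ne_zero {K V W : Type*} [Field K]
    [AddCommGroup V] [Module K V] [AddCommGroup W] [Module K W] {t : V ⊗[K] W} (ht : t ≠ 0) :
    ∃ (g : W →ₗ[K] W) (v : V) (w : W), v ≠ 0 ∧ w ≠ 0 ∧ g.lTensor V t = v ⊗ₜ w := by
  classical
  let b := Module.Basis.ofVectorSpace K W
  let e : V ⊗[K] W ≃ₗ[K] (_ →₀ V) :=
    (TensorProduct.congr (LinearEquiv.refl K V) b.repr).trans (finsuppScalarRight K K V _)
  have he : ∀ i, ((b.coord i).smulRight (b i)).lTensor V t = e t i ⊗ₜ b i := by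
    intro i
    clear ht
    induction t using TensorProduct.induction_on with
    | zero => simp
    | tmul x y => simp [e, TensorProduct.smul_tmul]
    | add u v hu hv => simp [hu, hv, TensorProduct.add_tmul]
  obtain ⟨i, hi⟩ := DFunLike.ne_iff.mp (e.map_ne_zero_iff.mpr ht)
  exact ⟨_, _, _, hi, b.ne_zero i, he i⟩

section TensorAction

variable {K A₁ A₂ W₁ W₂ : Type*} [CommSemiring K] [Ring A₁] [Algebra K A₁] [Ring A₂] [Algebra K A₂]
  [AddCommGroup W₁] [Module K W₁] [Module A₁ W₁] [AddCommGroup W₂] [Module K W₂] [Module A₂ W₂]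
  [Module (A₁ ⊗[K] A₂) (W₁ ⊗[K] W₂)]

theorem exists_one_tmul_smul_eq_lTensor
    (hsmul : ∀ (a₁ : A₁) (a₂ : A₂) (w₁ : W₁) (w₂ : W₂),
      (a₁ ⊗ₜ[K] a₂) • (w₁ ⊗ₜ[K] w₂) = (a₁ • w₁) ⊗ₜ[K] (a₂ • w₂))
    [IsSimpleModule A₂ W₂] (hend : ∀ φ : W₂ →ₗ[A₂] W₂, ∃ c : K, ∀ w : W₂, φ w = c • w)
    (g : W₂ →ₗ[K] W₂) (t : W₁ ⊗[K] W₂) :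
    ∃ a : A₂, ((1 : A₁) ⊗ₜ[K] a) • t = g.lTensor W₁ t := by
  classical
  obtain ⟨S, rfl⟩ := TensorProduct.exists_finset t
  obtain ⟨a, ha⟩ := IsSimpleModule.exists_smul_eq_of_forall_end_eq_smul hend g (S.image Prod.snd)
  refine ⟨a, ?_⟩
  simp only [Finset.smul_sum, map_sum, hsmul, one_smul, LinearMap.lTensor_tmul]
  exact Finset.sum_congr rfl fun p hp => by rw [ha p.2 (Finset.mem_image_of_mem _ hp)]

theorem span_tmul_eq_top_of_ne_zero
    (hsmul : ∀ (a₁ : A₁) (a₂ : A₂) (w₁ : W₁) (w₂ : W₂),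
      (a₁ ⊗ₜ[K] a₂) • (w₁ ⊗ₜ[K] w₂) = (a₁ • w₁) ⊗ₜ[K] (a₂ • w₂))
    [IsSimpleModule A₁ W₁] [IsSimpleModule A₂ W₂] {x : W₁} {y : W₂} (hx : x ≠ 0) (hy : y ≠ 0) :
    Submodule.span (A₁ ⊗[K] A₂) {x ⊗ₜ[K] y} = ⊤ := by
  rw [eq_top_iff]
  -- The action of `A₁ ⊗ A₂` is only known on pure tensors, so `K`-spans are of no use here.
  rintro z -
  induction z using TensorProduct.induction_on with
  | zero => exact zero_mem _
  | tmul x' y' =>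
    obtain ⟨a₁, rfl⟩ := IsSimpleModule.toSpanSingleton_surjective A₁ hx x'
    obtain ⟨a₂, rfl⟩ := IsSimpleModule.toSpanSingleton_surjective A₂ hy y'
    rw [LinearMap.toSpanSingleton_apply, LinearMap.toSpanSingleton_apply, ← hsmul]
    exact Submodule.smul_mem _ _ (Submodule.mem_span_singleton_self _)
  | add u v hu hv => exact add_mem hu hv

end TensorAction

theorem tensorProduct_isSimpleModule_of_schur_general {A₁ A₂ W₁ W₂ : Type*}
    [Ring A₁] [Algebra ℂ A₁] [Ring A₂] [Algebra ℂ A₂]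
    [AddCommGroup W₁] [Module ℂ W₁] [Module A₁ W₁]
    [AddCommGroup W₂] [Module ℂ W₂] [Module A₂ W₂]
    (hW₁ : IsSimpleModule A₁ W₁) (hW₂ : IsSimpleModule A₂ W₂)
    (hend₂ : ∀ φ : W₂ →ₗ[A₂] W₂, ∃ c : ℂ, ∀ w : W₂, φ w = c • w)
    [Module (A₁ ⊗[ℂ] A₂) (W₁ ⊗[ℂ] W₂)]
    (hsmul : ∀ (a₁ : A₁) (a₂ : A₂) (w₁ : W₁) (w₂ : W₂),
      (a₁ ⊗ₜ[ℂ] a₂) • (w₁ ⊗ₜ[ℂ] w₂) = (a₁ • w₁) ⊗ₜ[ℂ] (a₂ • w₂)) :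
    IsSimpleModule (A₁ ⊗[ℂ] A₂) (W₁ ⊗[ℂ] W₂) := by
  have := IsSimpleModule.nontrivial A₁ W₁
  have := IsSimpleModule.nontrivial A₂ W₂
  refine isSimpleModule_iff_toSpanSingleton_surjective.mpr ⟨inferInstance, fun t ht => ?_⟩
  obtain ⟨g, x, y, hx, hy, hg⟩ := exists_lTensor_eq_tmul_of_ne_zero ht
  obtain ⟨a, ha⟩ := exists_one_tmul_smul_eq_lTensor hsmul hend₂ g t
  have hxy : x ⊗ₜ[ℂ] y ∈ Submodule.span (A₁ ⊗[ℂ] A₂) {t} :=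
    hg ▸ ha ▸ Submodule.smul_mem _ _ (Submodule.mem_span_singleton_self t)
  rw [← LinearMap.range_eq_top, ← LinearMap.span_singleton_eq_range, eq_top_iff,
    ← span_tmul_eq_top_of_ne_zero hsmul hx hy]
  exact (Submodule.span_singleton_le_iff_mem _ _).mpr hxy

/-- 'If' direction of Theorem 3.6 under the Schur-type hypothesis: if `W₁` and `W₂`
are simple modules over unital associative ℂ-algebras `A₁`, `A₂` whose module
endomorphisms are all scalars, then `W₁ ⊗[ℂ] W₂` is a simple
`A₁ ⊗[ℂ] A₂`-module (for the componentwise action). -/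
theorem tensorProduct_isSimpleModule_of_schur {A₁ A₂ W₁ W₂ : Type*}
    [Ring A₁] [Algebra ℂ A₁] [Ring A₂] [Algebra ℂ A₂]
    [AddCommGroup W₁] [Module ℂ W₁] [Module A₁ W₁] [IsScalarTower ℂ A₁ W₁]
    [AddCommGroup W₂] [Module ℂ W₂] [Module A₂ W₂] [IsScalarTower ℂ A₂ W₂]
    (hW₁ : IsSimpleModule A₁ W₁) (hW₂ : IsSimpleModule A₂ W₂)
    (hend₁ : ∀ φ : W₁ →ₗ[A₁] W₁, ∃ c : ℂ, ∀ w : W₁, φ w = c • w)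
    (hend₂ : ∀ φ : W₂ →ₗ[A₂] W₂, ∃ c : ℂ, ∀ w : W₂, φ w = c • w)
    [Module (A₁ ⊗[ℂ] A₂) (W₁ ⊗[ℂ] W₂)]
    (hsmul : ∀ (a₁ : A₁) (a₂ : A₂) (w₁ : W₁) (w₂ : W₂),
      (a₁ ⊗ₜ[ℂ] a₂) • (w₁ ⊗ₜ[ℂ] w₂) = (a₁ • w₁) ⊗ₜ[ℂ] (a₂ • w₂)) :
    IsSimpleModule (A₁ ⊗[ℂ] A₂) (W₁ ⊗[ℂ] W₂) :=
  tensorProduct_isSimpleModule_of_schur_general hW₁ hW₂ hend₂ hsmul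
end

section
/- Let M be a nonzero finite-dimensional ℂ-vector space, and let B₁ and B₂ be unital ℂ-subalgebras of End_ℂ(M) that commute elementwise (b₁b₂ = b₂b₁ for all b₁ ∈ B₁, b₂ ∈ B₂) and such that the products {b₁b₂ : b₁ ∈ B₁, b₂ ∈ B₂} span End_ℂ(M). Let M₁ ⊆ M be a simple B₁-submodule of M. Then B₁ acts faithfully on M₁; that is, if b₁ ∈ B₁ restricts to zero on M₁, then b₁ = 0 on M. (Intermediate claim in the proof of Theorem 5.6 of the paper: any element of A(V₁; W^{(β₁,β₂)}_{(n₁,n₂)}) annihilating M₁ annihilates B₂·M₁ = B₂B₁·M₁ = End(M)·M₁ = M.) -/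
/-- Intermediate claim in the proof of Theorem 5.6: if `B₁`, `B₂` are elementwise
commuting unital subalgebras of `End ℂ M` (`M` a nonzero finite-dimensional complex
vector space) whose products span `End ℂ M`, and `M₁` is a simple `B₁`-submodule of
`M`, then `B₁` acts faithfully on `M₁`: any `b ∈ B₁` vanishing on `M₁` is zero. -/
theorem faithful_on_simple_submodule {M : Type*} [AddCommGroup M] [Module ℂ M]
    [FiniteDimensional ℂ M] [Nontrivial M]
    (B₁ B₂ : Subalgebra ℂ (Module.End ℂ M))
    (hcomm : ∀ b₁ ∈ B₁, ∀ b₂ ∈ B₂, b₁ * b₂ = b₂ * b₁)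
    (hspan : Submodule.span ℂ
      {x : Module.End ℂ M | ∃ b₁ ∈ B₁, ∃ b₂ ∈ B₂, x = b₁ * b₂} = ⊤)
    (M₁ : Submodule ℂ M) (hM₁ne : M₁ ≠ ⊥)
    (hM₁inv : ∀ b ∈ B₁, ∀ m ∈ M₁, b m ∈ M₁)
    (hM₁simple : ∀ N : Submodule ℂ M, N ≤ M₁ →
      (∀ b ∈ B₁, ∀ m ∈ N, b m ∈ N) → N = ⊥ ∨ N = M₁)
    (b : Module.End ℂ M) (hb : b ∈ B₁) (hbz : ∀ m ∈ M₁, b m = 0) :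
    b = 0 := by
  -- pick a nonzero m ∈ M₁
  obtain ⟨m, hmM₁, hm0⟩ := Submodule.exists_mem_ne_zero_of_ne_bot hM₁ne
  -- b kills x m for every x : End M
  have key : ∀ x : Module.End ℂ M, b (x m) = 0 := by
    intro x
    have hx : x ∈ Submodule.span ℂ
        {x : Module.End ℂ M | ∃ b₁ ∈ B₁, ∃ b₂ ∈ B₂, x = b₁ * b₂} := by
      rw [hspan]; trivial
    induction hx using Submodule.span_induction with
    | mem x hxmem =>
      obtain ⟨b₁, hb₁, b₂, hb₂, rfl⟩ := hxmem
      have hbb₁ : b * b₁ ∈ B₁ := mul_mem hb hb₁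
      have hc : (b * b₁) * b₂ = b₂ * (b * b₁) := hcomm _ hbb₁ _ hb₂
      have : b ((b₁ * b₂) m) = ((b * b₁) * b₂) m := by
        simp [Module.End.mul_apply, mul_assoc]
      rw [this, hc]
      have : (b * b₁) m = 0 := hbz _ (hM₁inv b₁ hb₁ m hmM₁)
      simp [Module.End.mul_apply] at this ⊢
      simp [this]
    | zero => simp
    | add x y _ _ hx hy => simp [map_add, hx, hy]
    | smul c x _ hx => simp [map_smul, hx]
  -- every v : M is x m for some x
  ext v
  have hne : ¬ ∀ φ : Module.Dual ℂ M, φ m = 0 := by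
    simpa [Module.forall_dual_apply_eq_zero_iff] using hm0
  push_neg at hne
  obtain ⟨f, hf⟩ := hne
  have := key ((((f m)⁻¹ • f)).smulRight v)
  simpa [LinearMap.smulRight_apply, inv_mul_cancel₀ hf, smul_smul] using this
end

section
/- Let A₁ and A₂ be unital associative ℂ-algebras each of countable dimension over ℂ. If W₁ is a semisimple A₁-module and W₂ is a semisimple A₂-module, then W₁ ⊗_ℂ W₂ is a semisimple module over A₁ ⊗_ℂ A₂. (Algebraic core of the 'if' direction of Theorem 6.3 of the paper: if every strongly graded module for each tensor factor is completely reducible, then every strongly graded module for the tensor product strongly graded vertex algebra is completely reducible; the key step is that a tensor product of direct sums of irreducibles is a direct sum of tensor products of irreducibles, each of which is irreducible.) -/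
/-!
Dixmier's lemma: if `A` has countable dimension over `ℂ` and `T` is a simple `A`-module, then
`End_A(T) = ℂ`, since an endomorphism `x` that is not a scalar would be transcendental and the
inverses `(x - c)⁻¹`, `c ∈ ℂ`, would form an uncountable linearly independent family in the
countable-dimensional space `End_A(T)`. Jacobson density then lets `A` act on any finite subset
of `T` like an arbitrary `ℂ`-linear map.

For simple `S ≤ W₁` and `T ≤ W₂`, act on a nonzero `y = ∑ sᵢ ⊗ tᵢ` in `S ⊗ T` by `1 ⊗ a`, where
`a` acts on the `tᵢ` like a rank-one map `φ(·) t`: this yields a nonzero pure tensor, which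
generates `S ⊗ T` because `S` and `T` are simple. So each `S ⊗ T` is simple, and these
submodules add up to `W₁ ⊗ W₂`.
-/

open Cardinal TensorProduct

/- The double centralizer of `x` is a commutative subalgebra closed under inverses, i.e. a
subfield containing `x`, so the field case applies there. -/
theorem Transcendental.linearIndependent_sub_inv_of_divisionRing {F D : Type*} [Field F]
    [DivisionRing D] [Algebra F D] {x : D} (hx : Transcendental F x) :
    LinearIndependent F fun a ↦ (x - algebraMap F D a)⁻¹ := by
  let C := Subalgebra.centralizer F (Set.centralizer {x})
  have hxC : x ∈ C := fun y hy ↦ (hy x rfl).symm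
  have hC : C ≤ Subalgebra.centralizer F {x} := fun a ha y hy ↦ by
    rw [Set.mem_singleton_iff.mp hy]
    exact ha x (Set.mem_centralizer_iff.mpr fun _ h ↦ by rw [h])
  have hfield : IsField C :=
    { exists_pair_ne := ⟨0, 1, zero_ne_one⟩
      mul_comm := fun a b ↦ Subtype.ext (a.2 b (hC b.2)).symm
      mul_inv_cancel := fun {a} ha ↦ ⟨⟨(a : D)⁻¹, Set.inv_mem_centralizer₀ a.2⟩,
        Subtype.ext (mul_inv_cancel₀ (by simpa using ha))⟩ }
  let _ : Field C := hfield.toField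
  have hxC' : Transcendental F (⟨x, hxC⟩ : C) :=
    Subalgebra.transcendental_iff_transcendental_val.mpr hx
  have hval : (fun a ↦ (x - algebraMap F D a)⁻¹) =
      C.val.toLinearMap ∘ fun a ↦ ((⟨x, hxC⟩ : C) - algebraMap F C a)⁻¹ := funext fun a ↦ by
    change _ = C.val _⁻¹
    rw [map_inv₀]
    simp
  rw [hval]
  exact hxC'.linearIndependent_sub_inv.map' _ (LinearMap.ker_eq_bot.mpr Subtype.val_injective)

theorem IsAlgClosed.algebraMap_bijective_of_rank_le_aleph0 {F D : Type*} [Field F]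
    [IsAlgClosed F] [DivisionRing D] [Algebra F D] (hF : ℵ₀ < #F) (hD : Module.rank F D ≤ ℵ₀) :
    Function.Bijective (algebraMap F D) := by
  have : Algebra.IsAlgebraic F D := ⟨fun x ↦ by
    by_contra hx
    have := (Transcendental.linearIndependent_sub_inv_of_divisionRing hx).cardinal_lift_le_rank
    exact hF.not_ge (lift_le_aleph0.mp (this.trans (lift_le_aleph0.mpr hD)))⟩
  exact IsAlgClosed.algebraMap_bijective_of_isIntegral

section SimpleModule

variable {F A M : Type*} [Field F] [IsAlgClosed F] [Ring A] [Algebra F A]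
  [AddCommGroup M] [Module F M] [Module A M] [IsScalarTower F A M] [IsSimpleModule A M]

theorem IsSimpleModule.algebraMap_end_bijective (hF : ℵ₀ < #F) (hA : Module.rank F A ≤ ℵ₀) :
    Function.Bijective (algebraMap F (Module.End A M)) := by
  classical
  have := IsSimpleModule.nontrivial A M
  obtain ⟨m, hm⟩ := exists_ne (0 : M)
  have hM : Module.rank F M ≤ ℵ₀ := by
    have := LinearMap.lift_rank_le_of_surjective
      ((LinearMap.toSpanSingleton A M m).restrictScalars F)
      (IsSimpleModule.toSpanSingleton_surjective A hm)
    exact lift_le_aleph0.mp (this.trans (lift_le_aleph0.mpr hA))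
  have hE : Module.rank F (Module.End A M) ≤ ℵ₀ := by
    let ev : Module.End A M →ₗ[F] M :=
      { toFun := fun g ↦ g m, map_add' := fun _ _ ↦ rfl, map_smul' := fun _ _ ↦ rfl }
    have hev : Function.Injective ev := (injective_iff_map_eq_zero ev).mpr fun g hg ↦ by
      by_contra hg0
      exact hm (LinearMap.injective_of_ne_zero hg0 (hg.trans (map_zero g).symm))
    have := LinearMap.lift_rank_le_of_injective ev hev
    exact lift_le_aleph0.mp (this.trans (lift_le_aleph0.mpr hM))
  exact IsAlgClosed.algebraMap_bijective_of_rank_le_aleph0 hF hE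

theorem IsSimpleModule.exists_forall_mem_finset_eq_smul (hF : ℵ₀ < #F)
    (hA : Module.rank F A ≤ ℵ₀) (g : M →ₗ[F] M) (s : Finset M) :
    ∃ a : A, ∀ m ∈ s, g m = a • m := by
  have hg (φ : Module.End A M) (m : M) : g (φ m) = φ (g m) := by
    obtain ⟨c, rfl⟩ := (algebraMap_end_bijective hF hA).2 φ
    simp [Module.algebraMap_end_apply]
  exact jacobson_density { g with map_smul' := hg } s

end SimpleModule

theorem TensorProduct.exists_finset_lTensor_eq {R M N P : Type*} [CommSemiring R]
    [AddCommMonoid M] [Module R M] [AddCommMonoid N] [Module R N] [AddCommMonoid P] [Module R P]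
    (y : M ⊗[R] N) :
    ∃ s : Finset N, ∀ f g : N →ₗ[R] P, (∀ n ∈ s, f n = g n) → f.lTensor M y = g.lTensor M y := by
  classical
  induction y using TensorProduct.induction_on with
  | zero => exact ⟨∅, by simp⟩
  | tmul m n => exact ⟨{n}, fun f g h ↦ by simp [h n (Finset.mem_singleton_self n)]⟩
  | add y z hy hz =>
    obtain ⟨s, hs⟩ := hy
    obtain ⟨t, ht⟩ := hz
    refine ⟨s ∪ t, fun f g h ↦ ?_⟩
    simp only [map_add, hs f g fun n hn ↦ h n (Finset.mem_union_left t hn),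
      ht f g fun n hn ↦ h n (Finset.mem_union_right s hn)]

theorem TensorProduct.exists_rid_lTensor_ne_zero {K M N : Type*} [Field K] [AddCommGroup M]
    [Module K M] [AddCommGroup N] [Module K N] {y : M ⊗[K] N} (hy : y ≠ 0) :
    ∃ φ : Module.Dual K N, TensorProduct.rid K M (φ.lTensor M y) ≠ 0 := by
  classical
  let b := Module.Free.chooseBasis K N
  obtain ⟨i, hi⟩ := Finsupp.ne_iff.mp ((equivFinsuppOfBasisRight b).map_ne_zero_iff.mpr hy)
  exact ⟨b.coord i, by simpa [equivFinsuppOfBasisRight_apply] using hi⟩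

theorem TensorProduct.lTensor_smulRight {K M N P : Type*} [CommSemiring K] [AddCommMonoid M]
    [Module K M] [AddCommMonoid N] [Module K N] [AddCommMonoid P] [Module K P]
    (φ : Module.Dual K N) (p : P) (y : M ⊗[K] N) :
    (φ.smulRight p).lTensor M y = TensorProduct.rid K M (φ.lTensor M y) ⊗ₜ p := by
  induction y using TensorProduct.induction_on with
  | zero => simp
  | tmul m n => simp [smul_tmul]
  | add y z hy hz => simp [hy, hz, add_tmul]

theorem IsSemisimpleModule.eq_top_of_forall_isSimpleModule_le {R M : Type*} [Ring R]
    [AddCommGroup M] [Module R M] [IsSemisimpleModule R M] {p : Submodule R M}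
    (h : ∀ m : Submodule R M, IsSimpleModule R m → m ≤ p) : p = ⊤ :=
  top_le_iff.mp (sSup_simples_eq_top R M ▸ sSup_le h)

theorem Submodule.isAtom_of_le_span_singleton {R M : Type*} [Ring R] [AddCommGroup M]
    [Module R M] {N : Submodule R M} (hN : N ≠ ⊥) (h : ∀ x ∈ N, x ≠ 0 → N ≤ R ∙ x) :
    IsAtom N := by
  refine ⟨hN, fun b hb ↦ ?_⟩
  by_contra hb0
  obtain ⟨x, hxb, hx0⟩ := b.ne_bot_iff.mp hb0
  exact hb.not_ge ((h x (hb.le hxb) hx0).trans ((span_singleton_le_iff_mem x b).mpr hxb))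

section TensorSubmodule

variable {F A₁ A₂ W₁ W₂ : Type*} [Field F] [Ring A₁] [Algebra F A₁] [Ring A₂] [Algebra F A₂]
  [AddCommGroup W₁] [Module F W₁] [Module A₁ W₁] [IsScalarTower F A₁ W₁]
  [AddCommGroup W₂] [Module F W₂] [Module A₂ W₂] [IsScalarTower F A₂ W₂]
  [Module (A₁ ⊗[F] A₂) (W₁ ⊗[F] W₂)]
  (hsmul : ∀ (a₁ : A₁) (a₂ : A₂) (w₁ : W₁) (w₂ : W₂),
    (a₁ ⊗ₜ[F] a₂) • (w₁ ⊗ₜ[F] w₂) = (a₁ • w₁) ⊗ₜ[F] (a₂ • w₂))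

variable (F) in
abbrev tensorSubtype (S : Submodule A₁ W₁) (T : Submodule A₂ W₂) :
    S ⊗[F] T →ₗ[F] W₁ ⊗[F] W₂ :=
  TensorProduct.map (S.subtype.restrictScalars F) (T.subtype.restrictScalars F)

include hsmul

def tensorSubmodule (S : Submodule A₁ W₁) (T : Submodule A₂ W₂) :
    Submodule (A₁ ⊗[F] A₂) (W₁ ⊗[F] W₂) where
  carrier := LinearMap.range (tensorSubtype F S T)
  add_mem' := add_mem
  zero_mem' := zero_mem _
  smul_mem' := by
    rintro r _ ⟨y, rfl⟩
    induction r using TensorProduct.induction_on with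
    | zero => simp
    | add r r' hr hr' => rw [add_smul]; exact add_mem hr hr'
    | tmul a₁ a₂ =>
      induction y using TensorProduct.induction_on with
      | zero => simp
      | add y z hy hz => rw [map_add, smul_add]; exact add_mem hy hz
      | tmul s t => exact ⟨(a₁ • s) ⊗ₜ (a₂ • t), by simp [hsmul]⟩

variable {S : Submodule A₁ W₁} {T : Submodule A₂ W₂}

theorem tmul_mem_tensorSubmodule {s : W₁} {t : W₂} (hs : s ∈ S) (ht : t ∈ T) :
    s ⊗ₜ t ∈ tensorSubmodule hsmul S T :=
  ⟨⟨s, hs⟩ ⊗ₜ ⟨t, ht⟩, rfl⟩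

theorem tensorSubmodule_le {N : Submodule (A₁ ⊗[F] A₂) (W₁ ⊗[F] W₂)}
    (h : ∀ s ∈ S, ∀ t ∈ T, s ⊗ₜ t ∈ N) : tensorSubmodule hsmul S T ≤ N := by
  rintro _ ⟨y, rfl⟩
  induction y using TensorProduct.induction_on with
  | zero => simp
  | add y z hy hz => rw [map_add]; exact add_mem hy hz
  | tmul s t => exact h s s.2 t t.2

theorem one_tmul_smul_tensorSubtype (a : A₂) (y : S ⊗[F] T) :
    ((1 : A₁) ⊗ₜ[F] a) • tensorSubtype F S T y =
      tensorSubtype F S T ((DistribSMul.toLinearMap F T a).lTensor S y) := by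
  induction y using TensorProduct.induction_on with
  | zero => simp
  | add y z hy hz => simp only [map_add, smul_add, hy, hz]
  | tmul s t => simp [hsmul]

theorem isSimpleModule_tensorSubmodule [IsAlgClosed F] (hF : ℵ₀ < #F)
    (hA₂ : Module.rank F A₂ ≤ ℵ₀) [IsSimpleModule A₁ S] [IsSimpleModule A₂ T] :
    IsSimpleModule (A₁ ⊗[F] A₂) (tensorSubmodule hsmul S T) := by
  have := IsSimpleModule.nontrivial A₁ S
  have := IsSimpleModule.nontrivial A₂ T
  have hinj : Function.Injective (tensorSubtype F S T) :=
    TensorProduct.map_injective_of_flat_flat _ _ S.subtype_injective T.subtype_injective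
  refine isSimpleModule_iff_isAtom.mpr (Submodule.isAtom_of_le_span_singleton ?_ ?_)
  · obtain ⟨y, hy⟩ := exists_ne (0 : S ⊗[F] T)
    exact (Submodule.ne_bot_iff _).mpr ⟨_, ⟨y, rfl⟩, (map_ne_zero_iff _ hinj).mpr hy⟩
  rintro _ ⟨y, rfl⟩ hy
  obtain ⟨φ, hm⟩ := exists_rid_lTensor_ne_zero ((map_ne_zero_iff _ hinj).mp hy)
  obtain ⟨t, ht⟩ := exists_ne (0 : T)
  obtain ⟨s, hs⟩ := exists_finset_lTensor_eq (P := T) y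
  obtain ⟨a, ha⟩ := IsSimpleModule.exists_forall_mem_finset_eq_smul hF hA₂ (φ.smulRight t) s
  set m := TensorProduct.rid F S (φ.lTensor S y)
  have hmt : (m : W₁) ⊗ₜ (t : W₂) ∈ (A₁ ⊗[F] A₂) ∙ tensorSubtype F S T y := by
    have := Submodule.smul_mem _ ((1 : A₁) ⊗ₜ[F] a) 
      (Submodule.mem_span_singleton_self (tensorSubtype F S T y))
    rwa [one_tmul_smul_tensorSubtype hsmul, ← hs _ _ ha, lTensor_smulRight] at this
  refine tensorSubmodule_le hsmul fun s' hs' t' ht' ↦ ?_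
  obtain ⟨a₁, ha₁⟩ := IsSimpleModule.toSpanSingleton_surjective A₁ hm ⟨s', hs'⟩
  obtain ⟨a₂, ha₂⟩ := IsSimpleModule.toSpanSingleton_surjective A₂ ht ⟨t', ht'⟩
  have := Submodule.smul_mem _ (a₁ ⊗ₜ[F] a₂) hmt
  rwa [hsmul, ← Submodule.coe_smul, ← Submodule.coe_smul, ← LinearMap.toSpanSingleton_apply,
    ha₁, ← LinearMap.toSpanSingleton_apply, ha₂] at this

def leftSlice (N : Submodule (A₁ ⊗[F] A₂) (W₁ ⊗[F] W₂)) (w₂ : W₂) : Submodule A₁ W₁ where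
  carrier := {w₁ | w₁ ⊗ₜ w₂ ∈ N}
  add_mem' hv hw := by simpa [add_tmul] using add_mem hv hw
  zero_mem' := by simp
  smul_mem' a w hw := by simpa [hsmul] using N.smul_mem (a ⊗ₜ[F] (1 : A₂)) hw

def rightSlice (N : Submodule (A₁ ⊗[F] A₂) (W₁ ⊗[F] W₂)) (w₁ : W₁) : Submodule A₂ W₂ where
  carrier := {w₂ | w₁ ⊗ₜ w₂ ∈ N}
  add_mem' hv hw := by simpa [tmul_add] using add_mem hv hw
  zero_mem' := by simp
  smul_mem' a w hw := by simpa [hsmul] using N.smul_mem ((1 : A₁) ⊗ₜ[F] a) hw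

theorem eq_top_of_forall_tensorSubmodule_le [IsSemisimpleModule A₁ W₁]
    [IsSemisimpleModule A₂ W₂] {N : Submodule (A₁ ⊗[F] A₂) (W₁ ⊗[F] W₂)}
    (h : ∀ (S : Submodule A₁ W₁) (T : Submodule A₂ W₂), IsSimpleModule A₁ S →
      IsSimpleModule A₂ T → tensorSubmodule hsmul S T ≤ N) :
    N = ⊤ := by
  have htmul (w₁ : W₁) (w₂ : W₂) : w₁ ⊗ₜ w₂ ∈ N := by
    suffices leftSlice hsmul N w₂ = ⊤ from Submodule.eq_top_iff'.mp this w₁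
    refine IsSemisimpleModule.eq_top_of_forall_isSimpleModule_le fun S hS s hs ↦ ?_
    suffices rightSlice hsmul N s = ⊤ from Submodule.eq_top_iff'.mp this w₂
    exact IsSemisimpleModule.eq_top_of_forall_isSimpleModule_le fun T hT t ht ↦
      h S T hS hT (tmul_mem_tensorSubmodule hsmul hs ht)
  refine Submodule.eq_top_iff'.mpr fun x ↦ ?_
  induction x using TensorProduct.induction_on with
  | zero => exact zero_mem N
  | tmul w₁ w₂ => exact htmul w₁ w₂
  | add x y hx hy => exact add_mem hx hy

end TensorSubmodule

theorem tensorProduct_isSemisimpleModule_general {A₁ A₂ W₁ W₂ : Type*}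
    [Ring A₁] [Algebra ℂ A₁] [Ring A₂] [Algebra ℂ A₂]
    [AddCommGroup W₁] [Module ℂ W₁] [Module A₁ W₁] [IsScalarTower ℂ A₁ W₁]
    [AddCommGroup W₂] [Module ℂ W₂] [Module A₂ W₂] [IsScalarTower ℂ A₂ W₂]
    (hA₂ : Module.rank ℂ A₂ ≤ ℵ₀)
    (hW₁ : IsSemisimpleModule A₁ W₁) (hW₂ : IsSemisimpleModule A₂ W₂)
    [Module (A₁ ⊗[ℂ] A₂) (W₁ ⊗[ℂ] W₂)]
    (hsmul : ∀ (a₁ : A₁) (a₂ : A₂) (w₁ : W₁) (w₂ : W₂),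
      (a₁ ⊗ₜ[ℂ] a₂) • (w₁ ⊗ₜ[ℂ] w₂) = (a₁ • w₁) ⊗ₜ[ℂ] (a₂ • w₂)) :
    IsSemisimpleModule (A₁ ⊗[ℂ] A₂) (W₁ ⊗[ℂ] W₂) := by
  have hℂ : ℵ₀ < #ℂ := mk_complex ▸ aleph0_lt_continuum
  refine .of_sSup_simples_eq_top (eq_top_of_forall_tensorSubmodule_le hsmul fun S T _ _ ↦ ?_)
  exact le_sSup (isSimpleModule_tensorSubmodule hsmul hℂ hA₂)

/-- Algebraic core of the 'if' direction of Theorem 6.3: for unital associative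
ℂ-algebras `A₁`, `A₂` of countable ℂ-dimension, the tensor product of a semisimple
`A₁`-module and a semisimple `A₂`-module is a semisimple `A₁ ⊗[ℂ] A₂`-module
(for the componentwise action). -/
theorem tensorProduct_isSemisimpleModule {A₁ A₂ W₁ W₂ : Type*}
    [Ring A₁] [Algebra ℂ A₁] [Ring A₂] [Algebra ℂ A₂]
    [AddCommGroup W₁] [Module ℂ W₁] [Module A₁ W₁] [IsScalarTower ℂ A₁ W₁]
    [AddCommGroup W₂] [Module ℂ W₂] [Module A₂ W₂] [IsScalarTower ℂ A₂ W₂]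
    (hA₁ : Module.rank ℂ A₁ ≤ ℵ₀) (hA₂ : Module.rank ℂ A₂ ≤ ℵ₀)
    (hW₁ : IsSemisimpleModule A₁ W₁) (hW₂ : IsSemisimpleModule A₂ W₂)
    [Module (A₁ ⊗[ℂ] A₂) (W₁ ⊗[ℂ] W₂)]
    (hsmul : ∀ (a₁ : A₁) (a₂ : A₂) (w₁ : W₁) (w₂ : W₂),
      (a₁ ⊗ₜ[ℂ] a₂) • (w₁ ⊗ₜ[ℂ] w₂) = (a₁ • w₁) ⊗ₜ[ℂ] (a₂ • w₂)) :
    IsSemisimpleModule (A₁ ⊗[ℂ] A₂) (W₁ ⊗[ℂ] W₂) :=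
  tensorProduct_isSemisimpleModule_general hA₂ hW₁ hW₂ hsmul
end
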